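/- Local Markov implies recursive factorization: suppose for each node x_j of a DAG, K satisfies K(x_j | parents, nondescendants-context) = K(x_j | {pa_j}*) up to a constant (local Markov condition), and K satisfies the chain rule over any topological ordering. Then the joint complexity factorizes: K(x_1,...,x_n) = Σ_j K(x_j | {pa_j}*) up to an additive constant depending on n. -/

import Mathlib

section

variable {ι G : Type*} [AddCommGroup G] [LinearOrder G] [IsOrderedAddMonoid G]

theorem Finset.abs_sum_sub_sum_le_card_nsmul (s : Finset ι) (f g : ι → G) {c : G}
    (h : ∀ i ∈ s, |f i - g i| ≤ c) :
    |∑ i ∈ s, f i - ∑ i ∈ s, g i| ≤ s.card • c :=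
  calc |∑ i ∈ s, f i - ∑ i ∈ s, g i| = |∑ i ∈ s, (f i - g i)| := by rw [Finset.sum_sub_distrib]
    _ ≤ ∑ i ∈ s, |f i - g i| := Finset.abs_sum_le_sum_abs _ _
    _ ≤ s.card • c := Finset.sum_le_card_nsmul _ _ _ h

theorem Finset.abs_sub_sum_le_of_abs_sub_sum_le (s : Finset ι) (a : G) (f g : ι → G) {c₁ c₂ : G}
    (hf : |a - ∑ i ∈ s, f i| ≤ c₁) (hfg : ∀ i ∈ s, |f i - g i| ≤ c₂) :
    |a - ∑ i ∈ s, g i| ≤ c₁ + s.card • c₂ :=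
  (abs_sub_le _ _ _).trans (add_le_add hf (s.abs_sum_sub_sum_le_card_nsmul f g hfg))

end

/-- Local Markov implies recursive factorization. With nodes `x_1,...,x_n`
listed in a topological order, the chain rule
`K(x_1,...,x_n) = Σ_j K(x_j | (x_1,...,x_{j-1})*)` up to an additive constant, together
with the local Markov condition `K(x_j | nondescendant-context) = K(x_j | {pa_j}*)`
up to an additive constant, give the factorization
`K(x_1,...,x_n) = Σ_j K(x_j | {pa_j}*)` up to an additive constant depending on `n`. -/
theorem local_markov_implies_recursive_factorization
    (S : Type) (n : ℕ) (x : Fin n → S)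
    (KJL : List S → ℤ)            -- joint complexity of a tuple of strings
    (Kc : S → List S → ℤ)         -- K(s | (tuple)*), given optimal compression of tuple
    (pa : Fin n → List S)         -- concatenated parents of each node
    (c₁ c₂ : ℤ)
    -- chain rule over the topological ordering
    (hchain : |KJL (List.ofFn x) - ∑ j : Fin n, Kc (x j) ((List.ofFn x).take j)| ≤ c₁)
    -- local Markov condition: given the parents' optimal compression, conditioning on
    -- the preceding nondescendants does not change the complexity
    (hlocal : ∀ j : Fin n,
      |Kc (x j) ((List.ofFn x).take j) - Kc (x j) (pa j)| ≤ c₂) :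
    |KJL (List.ofFn x) - ∑ j : Fin n, Kc (x j) (pa j)| ≤ c₁ + n * c₂ := by
  have h := Finset.univ.abs_sub_sum_le_of_abs_sub_sum_le _ _ _ hchain fun j _ => hlocal j
  rwa [Finset.card_univ, Fintype.card_fin, nsmul_eq_mul] at h
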